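/- arXiv:2205.08795 — 6 statements merged into one kernel-verified Lean document; each statement's English description precedes it below -/
import Mathlib

section
/- Let p be a prime number, let k and l be positive integers, let r and s be integers with 0 ≤ r < k and 0 ≤ s < l, and let u and v be integers coprime to p. If there exist additive group homomorphisms φ : ℤ/p^kℤ → ℤ/p^lℤ with φ(p^r·u) = p^s·v and ψ : ℤ/p^lℤ → ℤ/p^kℤ with ψ(p^s·v) = p^r·u (where p^r·u and p^s·v denote the residue classes of these integers), then k = l and r = s. -/
/-!
Along a homomorphism the additive order of an element can only drop (it divides) and its
`p`-divisibility can only grow. In `ZMod (p ^ k)` the class of `p ^ r * u` has order `p ^ (k - r)`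
and is divisible by exactly `p ^ r`, so mutual degeneration gives `l - s = k - r` and `r = s`.
-/

def DegeneratesTo {G₁ G₂ : Type*} [AddGroup G₁] [AddGroup G₂] (a : G₁) (b : G₂) : Prop :=
  ∃ φ : G₁ →+ G₂, φ a = b

namespace DegeneratesTo

variable {G₁ G₂ : Type*} [AddGroup G₁] [AddGroup G₂] {a : G₁} {b : G₂}

theorem zsmul_eq_zero (h : DegeneratesTo a b) {n : ℤ} (ha : n • a = 0) : n • b = 0 := by
  obtain ⟨φ, rfl⟩ := h
  rw [← map_zsmul, ha, map_zero]

theorem exists_eq_zsmul {n : ℤ} (h : DegeneratesTo (n • a) b) : ∃ w : G₂, b = n • w := by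
  obtain ⟨φ, rfl⟩ := h
  exact ⟨φ a, map_zsmul φ n a⟩

end DegeneratesTo

namespace ZMod

theorem intCast_mul_eq_zsmul (N : ℕ) (n x : ℤ) : ((n * x : ℤ) : ZMod N) = n • (x : ZMod N) := by
  rw [Int.cast_mul, zsmul_eq_mul]

theorem zsmul_eq_zero_of_dvd {N : ℕ} {n : ℤ} (h : (N : ℤ) ∣ n) (w : ZMod N) : n • w = 0 := by
  rw [zsmul_eq_mul, (intCast_zmod_eq_zero_iff_dvd n N).2 h, zero_mul]

variable {p : ℕ}

theorem pow_zsmul_intCast_pow_mul (N a b : ℕ) (v : ℤ) :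
    (p : ℤ) ^ a • (((p : ℤ) ^ b * v : ℤ) : ZMod N) = (((p : ℤ) ^ (a + b) * v : ℤ) : ZMod N) := by
  rw [← intCast_mul_eq_zsmul, pow_add, mul_assoc]

theorem intCast_pow_mul_eq_zero {l t : ℕ} (h : l ≤ t) (v : ℤ) :
    (((p : ℤ) ^ t * v : ℤ) : ZMod (p ^ l)) = 0 := by
  rw [intCast_zmod_eq_zero_iff_dvd, Nat.cast_pow]
  exact (pow_dvd_pow _ h).mul_right v

theorem le_of_intCast_pow_mul_eq_zero (hp : 1 < p) {v : ℤ} (hv : IsCoprime v p) {l t : ℕ}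
    (h : (((p : ℤ) ^ t * v : ℤ) : ZMod (p ^ l)) = 0) : l ≤ t := by
  rw [intCast_zmod_eq_zero_iff_dvd, Nat.cast_pow] at h
  have hp₀ : (p : ℤ) ≠ 0 := by omega
  have hp₁ : ¬IsUnit (p : ℤ) := by rw [Int.isUnit_iff]; omega
  exact (pow_dvd_pow_iff hp₀ hp₁).1 ((hv.symm.pow_left).dvd_of_dvd_mul_right h)

variable {k l r s : ℕ} {u v : ℤ}

theorem le_sub_add_of_degeneratesTo (hp : 1 < p) (hv : IsCoprime v p) (hr : r ≤ k)
    (h : DegeneratesTo (((p : ℤ) ^ r * u : ℤ) : ZMod (p ^ k))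
      (((p : ℤ) ^ s * v : ℤ) : ZMod (p ^ l))) :
    l ≤ k - r + s := by
  have hkill : (p : ℤ) ^ (k - r) • (((p : ℤ) ^ r * u : ℤ) : ZMod (p ^ k)) = 0 := by
    rw [pow_zsmul_intCast_pow_mul, Nat.sub_add_cancel hr, intCast_pow_mul_eq_zero le_rfl]
  have himage := h.zsmul_eq_zero hkill
  rw [pow_zsmul_intCast_pow_mul] at himage
  exact le_of_intCast_pow_mul_eq_zero hp hv himage

theorem le_of_degeneratesTo (hp : 1 < p) (hv : IsCoprime v p) (hs : s < l)
    (h : DegeneratesTo (((p : ℤ) ^ r * u : ℤ) : ZMod (p ^ k))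
      (((p : ℤ) ^ s * v : ℤ) : ZMod (p ^ l))) :
    r ≤ s := by
  rw [intCast_mul_eq_zsmul] at h
  obtain ⟨w, hw⟩ := DegeneratesTo.exists_eq_zsmul h
  have hkill : (p : ℤ) ^ (l - r) • (((p : ℤ) ^ s * v : ℤ) : ZMod (p ^ l)) = 0 := by
    rw [hw, smul_smul, ← pow_add]
    refine zsmul_eq_zero_of_dvd ?_ w
    exact_mod_cast pow_dvd_pow p (by omega : l ≤ l - r + r)
  rw [pow_zsmul_intCast_pow_mul] at hkill
  have := le_of_intCast_pow_mul_eq_zero hp hv hkill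
  omega

end ZMod

theorem degeneration_antisymm_general (p : ℕ) (hp : p.Prime) (k l : ℕ)
    (r s : ℕ) (hr : r < k) (hs : s < l) (u v : ℤ)
    (hu : IsCoprime u (p : ℤ)) (hv : IsCoprime v (p : ℤ))
    (hφ : ∃ φ : ZMod (p ^ k) →+ ZMod (p ^ l),
        φ (((p : ℤ) ^ r * u : ℤ) : ZMod (p ^ k)) = (((p : ℤ) ^ s * v : ℤ) : ZMod (p ^ l)))
    (hψ : ∃ ψ : ZMod (p ^ l) →+ ZMod (p ^ k),
        ψ (((p : ℤ) ^ s * v : ℤ) : ZMod (p ^ l)) = (((p : ℤ) ^ r * u : ℤ) : ZMod (p ^ k))) :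
    k = l ∧ r = s := by
  have h₁ := ZMod.le_sub_add_of_degeneratesTo hp.one_lt hv hr.le hφ
  have h₂ := ZMod.le_of_degeneratesTo hp.one_lt hv hs hφ
  have h₃ := ZMod.le_sub_add_of_degeneratesTo hp.one_lt hu hs.le hψ
  have h₄ := ZMod.le_of_degeneratesTo hp.one_lt hu hr hψ
  omega

/-- If the class of `p^r·u` in `ℤ/p^kℤ` degenerates to the class of `p^s·v`
in `ℤ/p^lℤ` and vice versa (via additive group homomorphisms), then `k = l` and `r = s`. -/
theorem degeneration_antisymm (p : ℕ) (hp : p.Prime) (k l : ℕ) (hk : 0 < k) (hl : 0 < l)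
    (r s : ℕ) (hr : r < k) (hs : s < l) (u v : ℤ)
    (hu : IsCoprime u (p : ℤ)) (hv : IsCoprime v (p : ℤ))
    (hφ : ∃ φ : ZMod (p ^ k) →+ ZMod (p ^ l),
        φ (((p : ℤ) ^ r * u : ℤ) : ZMod (p ^ k)) = (((p : ℤ) ^ s * v : ℤ) : ZMod (p ^ l)))
    (hψ : ∃ ψ : ZMod (p ^ l) →+ ZMod (p ^ k),
        ψ (((p : ℤ) ^ s * v : ℤ) : ZMod (p ^ l)) = (((p : ℤ) ^ r * u : ℤ) : ZMod (p ^ k))) :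
    k = l ∧ r = s :=
  degeneration_antisymm_general p hp k l r s hr hs u v hu hv hφ hψ
end

section
/- Let p be a prime number, n ≥ 1, and G = ℤ/p^nℤ. Let a ∈ O_{n,p^i} and b ∈ O_{n,p^j} with 0 ≤ i, j ≤ n and a ≠ b. Then a and b are adjacent in the group-annihilator graph Γ(G) if and only if i + j ≥ n. -/
/-- The `a`-annihilator of the abelian group `G` (viewed as a `ℤ`-module):
`[a : G] = {x ∈ ℤ : x•G ⊆ ℤ•a}`. -/
def annIdeal (G : Type*) [AddCommGroup G] (a : G) : Set ℤ :=
  {x : ℤ | ∀ g : G, ∃ m : ℤ, x • g = m • a}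

/-- The group-annihilator graph `Γ(G)`: vertices are the elements of `G`, and distinct
`a`, `b` are adjacent iff `[a : G]·[b : G]·G = {0}`. -/
def grpAnnGraph (G : Type*) [AddCommGroup G] : SimpleGraph G where
  Adj a b := a ≠ b ∧ ∀ x ∈ annIdeal G a, ∀ y ∈ annIdeal G b, ∀ g : G, (x * y) • g = 0
  symm := by
    constructor
    rintro a b ⟨hne, h⟩
    refine ⟨hne.symm, fun y hy x hx g => ?_⟩
    rw [mul_comm]
    exact h x hx y hy g
  loopless := ⟨fun a h => h.1 rfl⟩

/-- The orbit `O_{n,p^i} ⊆ ℤ/p^nℤ`: classes of `p^i·α` with `α` coprime to `p`. -/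
def orbitSet (p n i : ℕ) : Set (ZMod (p ^ n)) :=
  {a | ∃ α : ℤ, IsCoprime α (p : ℤ) ∧ a = (((p : ℤ) ^ i * α : ℤ) : ZMod (p ^ n))}

/-
Since `ℤ/p^nℤ` is cyclic, `x • G ⊆ ℤ • a` only has to be tested on the generator `1`, so
`[a : G]` is the set of `x` with `x ≡ c·a (mod p^n)` for some `c`. For `a = p^i·α` with `α` a unit
mod `p^n` and `i ≤ n` this is exactly `p^i ℤ`. Hence `[a : G]·[b : G]·G = 0` amounts to
`p^n ∣ p^i·p^j`, i.e. `n ≤ i + j`.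
-/

theorem mem_annIdeal_zmod_iff {m : ℕ} (a : ZMod m) (x : ℤ) :
    x ∈ annIdeal (ZMod m) a ↔ ∃ c : ℤ, (x : ZMod m) = c * a := by
  constructor
  · intro h
    obtain ⟨c, hc⟩ := h 1
    exact ⟨c, by simpa [zsmul_eq_mul] using hc⟩
  · rintro ⟨c, hc⟩ g
    obtain ⟨k, rfl⟩ := ZMod.intCast_surjective g
    exact ⟨k * c, by rw [zsmul_eq_mul, zsmul_eq_mul, hc]; push_cast; ring⟩

theorem grpAnnGraph_zmod_adj_iff {m : ℕ} (a b : ZMod m) :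
    (grpAnnGraph (ZMod m)).Adj a b ↔
      a ≠ b ∧ ∀ x ∈ annIdeal (ZMod m) a, ∀ y ∈ annIdeal (ZMod m) b, ((x * y : ℤ) : ZMod m) = 0 := by
  refine and_congr_right fun _ => forall₄_congr fun x _ y _ => ⟨fun h => ?_, fun h g => ?_⟩
  · simpa using h 1
  · rw [zsmul_eq_mul, h, zero_mul]

theorem mem_annIdeal_pow_mul_iff {p n i : ℕ} (hi : i ≤ n) {α : ℤ} (hα : IsCoprime α p)
    (x : ℤ) :
    x ∈ annIdeal (ZMod (p ^ n)) (((p : ℤ) ^ i * α : ℤ) : ZMod (p ^ n)) ↔ (p : ℤ) ^ i ∣ x := by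
  rw [mem_annIdeal_zmod_iff]
  constructor
  · rintro ⟨c, hc⟩
    push_cast at hc
    have hmod : ((p ^ n : ℕ) : ℤ) ∣ x - c * ((p : ℤ) ^ i * α) := by
      rw [← ZMod.intCast_zmod_eq_zero_iff_dvd]
      push_cast
      rw [hc, sub_self]
    rw [Nat.cast_pow] at hmod
    exact (dvd_sub_left ⟨c * α, by ring⟩).mp ((pow_dvd_pow _ hi).trans hmod)
  · rintro ⟨k, rfl⟩
    obtain ⟨u, v, huv⟩ := hα.pow_right (n := n)
    have hpn : (p : ZMod (p ^ n)) ^ n = 0 := by rw [← Nat.cast_pow, ZMod.natCast_self]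
    have hαu : ((u : ℤ) : ZMod (p ^ n)) * (α : ZMod (p ^ n)) = 1 := by
      have := congrArg (fun t : ℤ => (t : ZMod (p ^ n))) huv
      push_cast at this
      linear_combination this - (v : ZMod (p ^ n)) * hpn
    exact ⟨k * u, by push_cast; linear_combination (-((p : ZMod (p ^ n)) ^ i * k)) * hαu⟩

theorem forall_dvd_mul_of_dvd_iff {R : Type*} [CommMonoid R] (m d e : R) :
    (∀ x, d ∣ x → ∀ y, e ∣ y → m ∣ x * y) ↔ m ∣ d * e :=
  ⟨fun h => h d dvd_rfl e dvd_rfl, fun h _ hx _ hy => h.trans (mul_dvd_mul hx hy)⟩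

theorem adj_iff_orbit_indices_general (p n i j : ℕ) (hp : p.Prime)
    (hi : i ≤ n) (hj : j ≤ n) (a b : ZMod (p ^ n))
    (ha : a ∈ orbitSet p n i) (hb : b ∈ orbitSet p n j) (hab : a ≠ b) :
    (grpAnnGraph (ZMod (p ^ n))).Adj a b ↔ n ≤ i + j := by
  obtain ⟨α, hα, rfl⟩ := ha
  obtain ⟨β, hβ, rfl⟩ := hb
  have hp' : Prime (p : ℤ) := Nat.prime_iff_prime_int.mp hp
  calc (grpAnnGraph (ZMod (p ^ n))).Adj _ _
      ↔ ∀ x : ℤ, (p : ℤ) ^ i ∣ x → ∀ y : ℤ, (p : ℤ) ^ j ∣ y → (p : ℤ) ^ n ∣ x * y := by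
        simp only [grpAnnGraph_zmod_adj_iff, mem_annIdeal_pow_mul_iff hi hα,
          mem_annIdeal_pow_mul_iff hj hβ, ZMod.intCast_zmod_eq_zero_iff_dvd, ne_eq, hab,
          not_false_eq_true, true_and, Nat.cast_pow]
    _ ↔ (p : ℤ) ^ n ∣ (p : ℤ) ^ (i + j) := by rw [forall_dvd_mul_of_dvd_iff, pow_add]
    _ ↔ n ≤ i + j := pow_dvd_pow_iff hp'.ne_zero hp'.not_isUnit

/-- For a prime `p`, `n ≥ 1`, `a ∈ O_{n,p^i}`, `b ∈ O_{n,p^j}` with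
`0 ≤ i, j ≤ n` and `a ≠ b`, the vertices `a` and `b` are adjacent in `Γ(ℤ/p^nℤ)`
iff `i + j ≥ n`. -/
theorem adj_iff_orbit_indices (p n i j : ℕ) (hp : p.Prime) (hn : 1 ≤ n)
    (hi : i ≤ n) (hj : j ≤ n) (a b : ZMod (p ^ n))
    (ha : a ∈ orbitSet p n i) (hb : b ∈ orbitSet p n j) (hab : a ≠ b) :
    (grpAnnGraph (ZMod (p ^ n))).Adj a b ↔ n ≤ i + j :=
  adj_iff_orbit_indices_general p n i j hp hi hj a b ha hb hab
end

section
/- Let p be a prime number, n ≥ 1, ℓ ≥ 2, and G = (ℤ/p^nℤ)^ℓ viewed as a ℤ-module. For every element a = (a_1, …, a_ℓ) ∈ G, the a-annihilator of G satisfies [a : G] = p^n·ℤ. -/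
instance ZMod.instPreValuationRingPrimePow (p n : ℕ) [Fact p.Prime] :
    PreValuationRing (ZMod (p ^ n)) :=
  (ZMod.ringHom_surjective (PadicInt.toZModPow n)).preValuationRing
    (PadicInt.toZModPow (p := p) n : ℤ_[p] →ₙ* ZMod (p ^ n))

theorem mem_annIdeal_of_intCast_eq_zero {R M : Type*} [Ring R] [AddCommGroup M] [Module R M]
    {x : ℤ} (hx : (x : R) = 0) (a : M) : x ∈ annIdeal M a :=
  fun g => ⟨0, by rw [← Int.cast_smul_eq_zsmul R, hx, zero_smul, zero_smul]⟩

theorem intCast_eq_zero_of_mem_annIdeal {R ι : Type*} [CommRing R] [PreValuationRing R]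
    [DecidableEq ι] {a : ι → R} {i j : ι} (hij : i ≠ j) {x : ℤ}
    (hx : x ∈ annIdeal (ι → R) a) : (x : R) = 0 := by
  wlog hdvd : a i ∣ a j generalizing i j
  · exact this hij.symm ((ValuationRing.dvd_total _ _).resolve_left hdvd)
  obtain ⟨c, hc⟩ := hdvd
  obtain ⟨m, hm⟩ := hx (Pi.single j 1)
  have hmi : 0 = (m : R) * a i := by
    simpa [Pi.single_eq_of_ne hij, zsmul_eq_mul] using congrFun hm i
  have hmj : (x : R) = m * a j := by
    simpa [zsmul_eq_mul] using congrFun hm j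
  rw [hmj, hc, ← mul_assoc, ← hmi, zero_mul]

theorem annIdeal_of_rank_ge_two_general (p n ℓ : ℕ) (hp : p.Prime) (hℓ : 2 ≤ ℓ)
    (a : Fin ℓ → ZMod (p ^ n)) :
    annIdeal (Fin ℓ → ZMod (p ^ n)) a = {x : ℤ | (p : ℤ) ^ n ∣ x} := by
  have : Fact p.Prime := ⟨hp⟩
  ext x
  have hchar : (x : ZMod (p ^ n)) = 0 ↔ (p : ℤ) ^ n ∣ x := by
    exact_mod_cast ZMod.intCast_zmod_eq_zero_iff_dvd x (p ^ n)
  rw [Set.mem_ofPred_eq, ← hchar]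
  exact ⟨intCast_eq_zero_of_mem_annIdeal (i := ⟨0, by omega⟩) (j := ⟨1, by omega⟩)
    (Fin.ne_of_val_ne zero_ne_one),
    fun hx => mem_annIdeal_of_intCast_eq_zero hx a⟩

/-- For a prime `p`, `n ≥ 1`, `ℓ ≥ 2` and `G = (ℤ/p^nℤ)^ℓ`, the
`a`-annihilator of every `a ∈ G` is `p^n ℤ`. -/
theorem annIdeal_of_rank_ge_two (p n ℓ : ℕ) (hp : p.Prime) (hn : 1 ≤ n) (hℓ : 2 ≤ ℓ)
    (a : Fin ℓ → ZMod (p ^ n)) :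
    annIdeal (Fin ℓ → ZMod (p ^ n)) a = {x : ℤ | (p : ℤ) ^ n ∣ x} :=
  annIdeal_of_rank_ge_two_general p n ℓ hp hℓ a
end

section
/- Let p be a prime number, n ≥ 1, ℓ ≥ 2, and G = (ℤ/p^nℤ)^ℓ. The group-annihilator graph Γ(G) is a complete graph: any two distinct elements a, b ∈ G are adjacent in Γ(G). -/
/-!
Every element `x` of an annihilator ideal `[a : Rⁱ]` with at least two coordinates satisfies
`x² = 0` in `R`: writing `x • eᵢ = m • a` and `x • eⱼ = m' • a` for distinct coordinates `i ≠ j`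
gives `x = m aᵢ`, `0 = m aⱼ`, `x = m' aⱼ`, `0 = m' aᵢ`, so `x² = (m aⱼ)(m' aᵢ) = 0`. For
`R = ℤ/N` this says `N ∣ x²`, and `N ∣ x²`, `N ∣ y²` force `N² ∣ (xy)²`, hence `N ∣ xy`.
-/

theorem exists_intCast_eq_mul_of_mem_annIdeal {ι R : Type*} [CommRing R] [DecidableEq ι]
    {a : ι → R} {x : ℤ} (hx : x ∈ annIdeal (ι → R) a) {i j : ι} (hij : i ≠ j) :
    ∃ m : ℤ, (x : R) = m * a i ∧ (m : R) * a j = 0 := by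
  obtain ⟨m, hm⟩ := hx (Pi.single i 1)
  refine ⟨m, ?_, ?_⟩
  · simpa [zsmul_eq_mul] using congrFun hm i
  · simpa [zsmul_eq_mul, Pi.single_eq_of_ne hij.symm] using (congrFun hm j).symm

theorem intCast_sq_eq_zero_of_mem_annIdeal {ι R : Type*} [CommRing R] [Nontrivial ι]
    {a : ι → R} {x : ℤ} (hx : x ∈ annIdeal (ι → R) a) : (x : R) ^ 2 = 0 := by
  classical
  obtain ⟨i, j, hij⟩ := exists_pair_ne ι
  obtain ⟨m, hxi, hmj⟩ := exists_intCast_eq_mul_of_mem_annIdeal hx hij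
  obtain ⟨m', hxj, hm'i⟩ := exists_intCast_eq_mul_of_mem_annIdeal hx hij.symm
  calc (x : R) ^ 2 = (m * a i) * (m' * a j) := by rw [sq, ← hxi, ← hxj]
    _ = (m * a j) * (m' * a i) := by ring
    _ = 0 := by rw [hmj, zero_mul]

theorem Int.dvd_mul_of_dvd_sq {N x y : ℤ} (hx : N ∣ x ^ 2) (hy : N ∣ y ^ 2) : N ∣ x * y :=
  (Int.pow_dvd_pow_iff two_ne_zero).mp (by rw [mul_pow, sq N]; exact mul_dvd_mul hx hy)

theorem dvd_sq_of_mem_annIdeal_zmod {ι : Type*} [Nontrivial ι] {N : ℕ} {a : ι → ZMod N}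
    {x : ℤ} (hx : x ∈ annIdeal (ι → ZMod N) a) : (N : ℤ) ∣ x ^ 2 :=
  (CharP.intCast_eq_zero_iff (ZMod N) N _).mp <| by
    push_cast
    exact intCast_sq_eq_zero_of_mem_annIdeal hx

theorem grpAnnGraph_pi_zmod_eq_top (ι : Type*) [Nontrivial ι] (N : ℕ) :
    grpAnnGraph (ι → ZMod N) = ⊤ := by
  ext a b
  refine ⟨fun h => h.1, fun hab => ⟨hab, fun x hx y hy g => ?_⟩⟩
  obtain ⟨k, hk⟩ := Int.dvd_mul_of_dvd_sq (dvd_sq_of_mem_annIdeal_zmod hx)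
    (dvd_sq_of_mem_annIdeal_zmod hy)
  rw [hk, mul_comm, mul_smul]
  ext i
  simp [zsmul_eq_mul]

theorem grpAnnGraph_complete_general (p n ℓ : ℕ) (hℓ : 2 ≤ ℓ)
    (a b : Fin ℓ → ZMod (p ^ n)) (hab : a ≠ b) :
    (grpAnnGraph (Fin ℓ → ZMod (p ^ n))).Adj a b := by
  have : Nontrivial (Fin ℓ) := Fin.nontrivial_iff_two_le.mpr hℓ
  rw [grpAnnGraph_pi_zmod_eq_top]
  exact hab

/-- For a prime `p`, `n ≥ 1` and `ℓ ≥ 2`, the group-annihilator graph of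
`G = (ℤ/p^nℤ)^ℓ` is complete: any two distinct elements are adjacent. -/
theorem grpAnnGraph_complete (p n ℓ : ℕ) (hp : p.Prime) (hn : 1 ≤ n) (hℓ : 2 ≤ ℓ)
    (a b : Fin ℓ → ZMod (p ^ n)) (hab : a ≠ b) :
    (grpAnnGraph (Fin ℓ → ZMod (p ^ n))).Adj a b :=
  grpAnnGraph_complete_general p n ℓ hℓ a b hab
end

section
/- Let p be a prime number and k ≤ l positive integers, and let φ : ℤ/p^kℤ → ℤ/p^lℤ be an additive group homomorphism. If a and b are adjacent vertices of the group-annihilator graph Γ(ℤ/p^kℤ) and φ(a) ≠ φ(b), then φ(a) and φ(b) are adjacent in Γ(ℤ/p^lℤ). In other words, every group homomorphism between these cyclic p-groups is a homomorphism of the associated group-annihilator graphs. -/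
section AnnihilatorGraph

variable {R : Type*} [CommRing R]

theorem mem_annIdeal_iff_dvd (hR : Function.Surjective (Int.cast : ℤ → R)) (a : R) (x : ℤ) :
    x ∈ annIdeal R a ↔ a ∣ (x : R) := by
  constructor
  · intro hx
    obtain ⟨m, hm⟩ := hx 1
    exact ⟨m, by simpa [zsmul_eq_mul, mul_comm] using hm⟩
  · rintro ⟨c, hc⟩ g
    obtain ⟨m, hm⟩ := hR (c * g)
    refine ⟨m, ?_⟩
    rw [zsmul_eq_mul, zsmul_eq_mul, hc, hm]
    ring

theorem grpAnnGraph_adj_iff (hR : Function.Surjective (Int.cast : ℤ → R)) (a b : R) :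
    (grpAnnGraph R).Adj a b ↔ a ≠ b ∧ a * b = 0 := by
  refine and_congr_right fun _ => ⟨fun h => ?_, fun h x hx y hy g => ?_⟩
  · obtain ⟨x, rfl⟩ := hR a
    obtain ⟨y, rfl⟩ := hR b
    simpa using h x ((mem_annIdeal_iff_dvd hR _ x).2 dvd_rfl) y
      ((mem_annIdeal_iff_dvd hR _ y).2 dvd_rfl) 1
  · obtain ⟨c, hc⟩ := (mem_annIdeal_iff_dvd hR a x).1 hx
    obtain ⟨d, hd⟩ := (mem_annIdeal_iff_dvd hR b y).1 hy
    calc (x * y) • g = a * b * (c * d * g) := by push_cast [zsmul_eq_mul, hc, hd]; ring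
      _ = 0 := by rw [h, zero_mul]

end AnnihilatorGraph

theorem ZMod.grpAnnGraph_adj_iff (n : ℕ) (a b : ZMod n) :
    (grpAnnGraph (ZMod n)).Adj a b ↔ a ≠ b ∧ a * b = 0 :=
  _root_.grpAnnGraph_adj_iff ZMod.intCast_surjective a b

theorem AddMonoidHom.map_mul_map_eq_zero_of_mul_eq_zero {n : ℕ} {R : Type*}
    [NonUnitalNonAssocRing R] (φ : ZMod n →+ R) {a b : ZMod n} (hab : a * b = 0) :
    φ a * φ b = 0 := by
  have hφ : ∀ x : ℤ, φ x = x • φ 1 := fun x => by rw [← map_zsmul, zsmul_one]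
  have hn : (n : ℤ) • φ 1 = 0 := by rw [← hφ, Int.cast_natCast, ZMod.natCast_self, map_zero]
  obtain ⟨x, rfl⟩ := ZMod.intCast_surjective a
  obtain ⟨y, rfl⟩ := ZMod.intCast_surjective b
  obtain ⟨t, ht⟩ := (ZMod.intCast_zmod_eq_zero_iff_dvd (x * y) n).1 (by push_cast; exact hab)
  calc φ x * φ y = (x * y) • (φ 1 * φ 1) := by rw [hφ, hφ, smul_mul_smul_comm]
    _ = 0 := by rw [ht, mul_comm, mul_smul, ← smul_mul_assoc, hn, zero_mul, smul_zero]

theorem groupHom_is_graphHom_general (p k l : ℕ)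
    (φ : ZMod (p ^ k) →+ ZMod (p ^ l)) (a b : ZMod (p ^ k))
    (hadj : (grpAnnGraph (ZMod (p ^ k))).Adj a b) (hne : φ a ≠ φ b) :
    (grpAnnGraph (ZMod (p ^ l))).Adj (φ a) (φ b) := by
  rw [ZMod.grpAnnGraph_adj_iff] at hadj ⊢
  exact ⟨hne, φ.map_mul_map_eq_zero_of_mul_eq_zero hadj.2⟩

/-- For a prime `p` and positive integers `k ≤ l`, every additive group
homomorphism `φ : ℤ/p^kℤ → ℤ/p^lℤ` is a homomorphism of the group-annihilator graphs:
it maps edges of `Γ(ℤ/p^kℤ)` with distinct images to edges of `Γ(ℤ/p^lℤ)`. -/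
theorem groupHom_is_graphHom (p k l : ℕ) (hp : p.Prime) (hk : 1 ≤ k) (hkl : k ≤ l)
    (φ : ZMod (p ^ k) →+ ZMod (p ^ l)) (a b : ZMod (p ^ k))
    (hadj : (grpAnnGraph (ZMod (p ^ k))).Adj a b) (hne : φ a ≠ φ b) :
    (grpAnnGraph (ZMod (p ^ l))).Adj (φ a) (φ b) :=
  groupHom_is_graphHom_general p k l φ a b hadj hne
end

section
/- Let Γ₁ and Γ₂ be finite threshold graphs. If Γ₁ and Γ₂ have the same degree sequence, i.e. the multiset of vertex degrees of Γ₁ equals the multiset of vertex degrees of Γ₂, then Γ₁ and Γ₂ are isomorphic as graphs. -/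
/-!
Enumerate a threshold graph as in its definition and let `b k` record whether the `k`-th vertex
is joined to all earlier ones. Then vertices `i < j` are adjacent iff `b j`, so the graph is
isomorphic to `thresholdGraph b n`. Its degree multiset determines `b` (except `b 0`): the last
vertex has degree `n - 1` if it is dominating and `0` otherwise, and in the second case no other
vertex reaches degree `n - 1`; deleting the last vertex lowers every other degree by `b (n - 1)`,
and we conclude by induction on `n`.
-/

/-- A simple graph on a (necessarily finite) vertex type is a threshold graph if its
vertices admit an enumeration `v_1, …, v_n` such that each `v_i` is adjacent either to all
of the previous vertices or to none of them. -/
def IsThreshold {V : Type*} (Γ : SimpleGraph V) : Prop :=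
  ∃ e : Fin (Nat.card V) ≃ V,
    ∀ i : Fin (Nat.card V),
      (∀ j, j < i → Γ.Adj (e j) (e i)) ∨ (∀ j, j < i → ¬ Γ.Adj (e j) (e i))

open Finset

theorem Fin.univ_val_map_val {α : Type*} (n : ℕ) (f : ℕ → α) :
    (univ : Finset (Fin n)).val.map (fun i : Fin n => f i) = (range n).val.map f := by
  rw [Fin.univ_val_map, List.ofFn_eq_map, Finset.range_val, Multiset.range,
    ← List.map_coe_finRange_eq_range, Multiset.map_coe, List.map_map]
  rfl

namespace SimpleGraph

variable {V W : Type*} [Fintype V] [Fintype W]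

def degreeMultiset (G : SimpleGraph V) [DecidableRel G.Adj] : Multiset ℕ :=
  univ.val.map fun v => G.degree v

theorem Iso.degreeMultiset_eq {G : SimpleGraph V} {H : SimpleGraph W} [DecidableRel G.Adj]
    [DecidableRel H.Adj] (φ : G ≃g H) : G.degreeMultiset = H.degreeMultiset := by
  rw [degreeMultiset, degreeMultiset, ← Multiset.map_univ_val_equiv φ.toEquiv, Multiset.map_map]
  exact Multiset.map_congr rfl fun v _ => (φ.degree_eq v).symm

end SimpleGraph

/-- The threshold graph on `0, …, n - 1` in which vertex `k` is joined to all earlier vertices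
if `b k` and to none of them otherwise; the value `b 0` is irrelevant. -/
def thresholdGraph (b : ℕ → Bool) (n : ℕ) : SimpleGraph (Fin n) where
  Adj i j := i ≠ j ∧ b (max i j)
  symm := ⟨fun i j h => ⟨h.1.symm, max_comm (i : ℕ) j ▸ h.2⟩⟩
  loopless := ⟨fun _ h => h.1 rfl⟩

instance (b : ℕ → Bool) (n : ℕ) : DecidableRel (thresholdGraph b n).Adj :=
  fun _ _ => inferInstanceAs (Decidable (_ ∧ _))

theorem IsThreshold.exists_iso_thresholdGraph {V : Type*} {Γ : SimpleGraph V}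
    (h : IsThreshold Γ) : ∃ b, Nonempty (thresholdGraph b (Nat.card V) ≃g Γ) := by
  classical
  obtain ⟨e, he⟩ := h
  let b : ℕ → Bool := fun k =>
    if hk : k < Nat.card V then decide (∃ j < (⟨k, hk⟩ : Fin _), Γ.Adj (e j) (e ⟨k, hk⟩))
    else false
  have adj_iff {i j : Fin (Nat.card V)} (hij : i < j) : Γ.Adj (e i) (e j) ↔ b j := by
    simp only [b, j.isLt, dif_pos, decide_eq_true_eq]
    refine ⟨fun hadj => ⟨i, hij, hadj⟩, fun ⟨k, hkj, hadj⟩ => ?_⟩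
    exact (he j).resolve_right (fun hnone => hnone k hkj hadj) i hij
  refine ⟨b, ⟨e, fun {i j} => ?_⟩⟩
  rcases lt_trichotomy i j with hij | rfl | hij
  · simp [thresholdGraph, adj_iff hij, hij.ne, hij.le]
  · simp
  · rw [Γ.adj_comm, adj_iff hij]
    simp [thresholdGraph, hij.ne', hij.le]

/-- The degree of vertex `i` in `thresholdGraph b n`, indexed by `ℕ` so that `n` can vary. -/
def thresholdDegree (b : ℕ → Bool) (n i : ℕ) : ℕ :=
  #{j ∈ range n | j ≠ i ∧ b (max i j)}

def thresholdDegrees (b : ℕ → Bool) (n : ℕ) : Multiset ℕ :=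
  (range n).val.map (thresholdDegree b n)

theorem degree_thresholdGraph (b : ℕ → Bool) (n : ℕ) (i : Fin n) :
    (thresholdGraph b n).degree i = thresholdDegree b n i := by
  rw [← SimpleGraph.card_neighborFinset_eq_degree, SimpleGraph.neighborFinset_eq_filter,
    thresholdDegree, card_filter, card_filter, ← Fin.sum_univ_eq_sum_range]
  refine Fintype.sum_congr _ _ fun j => ?_
  simp only [thresholdGraph, ne_eq, ne_comm, Fin.val_ne_iff]
  congr

theorem degreeMultiset_thresholdGraph (b : ℕ → Bool) (n : ℕ) :
    (thresholdGraph b n).degreeMultiset = thresholdDegrees b n := by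
  simp only [SimpleGraph.degreeMultiset, degree_thresholdGraph]
  exact Fin.univ_val_map_val n _

section

variable (b : ℕ → Bool)

theorem thresholdDegree_le {n i : ℕ} (hi : i < n) : thresholdDegree b n i ≤ n - 1 := by
  calc thresholdDegree b n i ≤ #((range n).erase i) :=
        card_le_card fun j hj => by simp_all
    _ = n - 1 := by rw [card_erase_of_mem (mem_range.2 hi), card_range]

theorem thresholdDegree_succ_self (n : ℕ) :
    thresholdDegree b (n + 1) n = if b n then n else 0 := by
  rw [thresholdDegree, range_add_one, filter_insert, if_neg (by simp),
    filter_congr (q := fun _ => b n) fun j hj => by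
      simp [(mem_range.1 hj).ne, (mem_range.1 hj).le]]
  split_ifs with hb <;> simp [hb]

theorem thresholdDegree_succ_of_lt {n i : ℕ} (hi : i < n) :
    thresholdDegree b (n + 1) i = thresholdDegree b n i + if b n then 1 else 0 := by
  rw [thresholdDegree, range_add_one, filter_insert, max_eq_right hi.le]
  simp only [ne_eq, hi.ne', not_false_eq_true, true_and]
  split_ifs
  · rw [card_insert_of_notMem (by simp)]
    rfl
  · rfl

theorem thresholdDegrees_succ (n : ℕ) :
    thresholdDegrees b (n + 1) =
      (if b n then n else 0) ::ₘ (thresholdDegrees b n).map (· + if b n then 1 else 0) := by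
  rw [thresholdDegrees, range_add_one, insert_val_of_notMem notMem_range_self, Multiset.map_cons,
    thresholdDegree_succ_self, thresholdDegrees, Multiset.map_map]
  congr 1
  exact Multiset.map_congr rfl fun i hi => thresholdDegree_succ_of_lt b (mem_range.1 hi)

theorem self_mem_thresholdDegrees_succ_iff {n : ℕ} (hn : 0 < n) :
    n ∈ thresholdDegrees b (n + 1) ↔ b n := by
  refine ⟨fun hmem => ?_, fun hb => by simp [thresholdDegrees_succ, hb]⟩
  by_contra hb
  rw [thresholdDegrees_succ, Bool.eq_false_iff.2 hb] at hmem
  simp only [Bool.false_eq_true, if_false, add_zero, Multiset.map_id', Multiset.mem_cons] at hmem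
  obtain hn₀ | hmem := hmem
  · exact hn.ne' hn₀
  · obtain ⟨i, hi, hdeg⟩ := Multiset.mem_map.1 hmem
    have := thresholdDegree_le b (mem_range.1 hi)
    omega

end

theorem eq_of_thresholdDegrees_eq {b c : ℕ → Bool} {n : ℕ}
    (h : thresholdDegrees b n = thresholdDegrees c n) {i : ℕ} (hi₀ : 0 < i) (hin : i < n) :
    b i = c i := by
  induction n with
  | zero => omega
  | succ n ih =>
    have hn : 0 < n := by omega
    have hbc : b n = c n := by
      rw [Bool.eq_iff_iff, ← self_mem_thresholdDegrees_succ_iff b hn,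
        ← self_mem_thresholdDegrees_succ_iff c hn, h]
    rcases (Nat.lt_succ_iff_lt_or_eq.1 hin) with hin | rfl
    · rw [thresholdDegrees_succ, thresholdDegrees_succ, hbc, Multiset.cons_inj_right] at h
      exact ih (Multiset.map_injective (add_left_injective _) h) hin
    · exact hbc

theorem thresholdGraph_congr {b c : ℕ → Bool} {n : ℕ}
    (h : ∀ i, 0 < i → i < n → b i = c i) : thresholdGraph b n = thresholdGraph c n := by
  ext i j
  simp only [thresholdGraph, ne_eq, and_congr_right_iff]
  intro hij
  rw [h _ (by omega) (max_lt i.isLt j.isLt)]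

theorem nonempty_iso_of_thresholdDegrees_eq {b c : ℕ → Bool} {n m : ℕ}
    (h : thresholdDegrees b n = thresholdDegrees c m) :
    Nonempty (thresholdGraph b n ≃g thresholdGraph c m) := by
  obtain rfl : n = m := by simpa [thresholdDegrees] using congr_arg Multiset.card h
  rw [thresholdGraph_congr fun i => eq_of_thresholdDegrees_eq h]
  exact ⟨.refl⟩

/-- Two finite threshold graphs with the same degree sequence (as a
multiset of vertex degrees) are isomorphic. -/
theorem threshold_iso_of_degreeSequence_eq {V₁ V₂ : Type*} [Fintype V₁] [Fintype V₂]
    (Γ₁ : SimpleGraph V₁) (Γ₂ : SimpleGraph V₂)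
    [DecidableRel Γ₁.Adj] [DecidableRel Γ₂.Adj]
    (h₁ : IsThreshold Γ₁) (h₂ : IsThreshold Γ₂)
    (hdeg : Multiset.map (fun v => Γ₁.degree v) Finset.univ.val =
      Multiset.map (fun v => Γ₂.degree v) Finset.univ.val) :
    Nonempty (Γ₁ ≃g Γ₂) := by
  obtain ⟨b, ⟨φ₁⟩⟩ := h₁.exists_iso_thresholdGraph
  obtain ⟨c, ⟨φ₂⟩⟩ := h₂.exists_iso_thresholdGraph
  have hdegs : thresholdDegrees b (Nat.card V₁) = thresholdDegrees c (Nat.card V₂) := by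
    rw [← degreeMultiset_thresholdGraph, ← degreeMultiset_thresholdGraph, φ₁.degreeMultiset_eq,
      φ₂.degreeMultiset_eq]
    exact hdeg
  obtain ⟨ψ⟩ := nonempty_iso_of_thresholdDegrees_eq hdegs
  exact ⟨φ₁.symm.trans (ψ.trans φ₂)⟩
end
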